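/- (Key projection inequality for the H-iterates.) Under the algorithm setup, for every n ∈ ℕ with W_n ≠ O and every entrywise-nonnegative H ∈ ℝ^{R×N}: ‖H_{n+1} − H‖_F² ≤ ‖H_n − H‖_F² + 2 μ_n (1 − α_n) (H − T_n(H_n)) • (W_nᵀ(W_n H_n − V)). -/

import Mathlib

open Matrix Filter

/-- Frobenius norm of a real matrix. -/
noncomputable def frob {m n : Type*} [Fintype m] [Fintype n] (X : Matrix m n ℝ) : ℝ :=
  Real.sqrt (∑ i, ∑ j, (X i j) ^ 2)

/-- Frobenius inner product of two real matrices. -/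
noncomputable def fip {m n : Type*} [Fintype m] [Fintype n] (X Y : Matrix m n ℝ) : ℝ :=
  ∑ i, ∑ j, X i j * Y i j

/-- Entrywise projection onto the nonnegative orthant. -/
def pplus {m n : Type*} (X : Matrix m n ℝ) : Matrix m n ℝ :=
  Matrix.of fun i j => max (X i j) 0

/-- Entrywise nonnegativity of a matrix. -/
def matNonneg {m n : Type*} (X : Matrix m n ℝ) : Prop := ∀ i j, 0 ≤ X i j

/-!
Everything is entrywise. For a real `h`, a step `μ g` and a target `c ≥ 0`, the point
`t = max (h - μ g) 0` is the projection of `h - μ g` onto `[0, ∞)`, so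
`(h - μ g - t) (c - t) ≤ 0`; expanding `(h - c)² = ((h - t) + (t - c))²` with this gives
`(t - c)² ≤ (h - c)² + 2 μ (c - t) g`. Convexity of the square handles the relaxation
`a h + (1 - a) t`, and summing over the entries gives the Frobenius-norm inequality.
-/

lemma mul_sub_max_zero_nonpos (y c : ℝ) (hc : 0 ≤ c) : (y - max y 0) * (c - max y 0) ≤ 0 := by
  rcases le_total 0 y with hy | hy
  · simp [max_eq_left hy]
  · rw [max_eq_right hy]
    nlinarith

lemma sq_max_sub_mul_sub_le (h c g μ : ℝ) (hc : 0 ≤ c) :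
    (max (h - μ * g) 0 - c) ^ 2 ≤ (h - c) ^ 2 + 2 * μ * ((c - max (h - μ * g) 0) * g) := by
  nlinarith [mul_sub_max_zero_nonpos (h - μ * g) c hc, sq_nonneg (h - max (h - μ * g) 0)]

lemma sq_relaxed_projection_step_le (h c g μ a : ℝ) (hc : 0 ≤ c) (ha : a ∈ Set.Icc (0 : ℝ) 1) :
    (a * h + (1 - a) * max (h - μ * g) 0 - c) ^ 2 ≤
      (h - c) ^ 2 + 2 * μ * (1 - a) * ((c - max (h - μ * g) 0) * g) := by
  set t := max (h - μ * g) 0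
  have hconvex : (a * h + (1 - a) * t - c) ^ 2 ≤ a * (h - c) ^ 2 + (1 - a) * (t - c) ^ 2 := by
    nlinarith [mul_nonneg (mul_nonneg ha.1 (sub_nonneg.2 ha.2)) (sq_nonneg (h - t))]
  nlinarith [mul_le_mul_of_nonneg_left (sq_max_sub_mul_sub_le h c g μ hc) (sub_nonneg.2 ha.2)]

lemma frob_sq {m n : Type*} [Fintype m] [Fintype n] (X : Matrix m n ℝ) :
    frob X ^ 2 = ∑ i, ∑ j, X i j ^ 2 :=
  Real.sq_sqrt (by positivity)

lemma frob_sq_relaxed_projection_step_le {m n : Type*} [Fintype m] [Fintype n]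
    (X C G : Matrix m n ℝ) (hC : matNonneg C) (μ a : ℝ) (ha : a ∈ Set.Icc (0 : ℝ) 1) :
    frob (a • X + (1 - a) • pplus (X - μ • G) - C) ^ 2 ≤
      frob (X - C) ^ 2 + 2 * μ * (1 - a) * fip (C - pplus (X - μ • G)) G := by
  simp only [frob_sq, fip, Finset.mul_sum, ← Finset.sum_add_distrib]
  gcongr with i _ j _
  simpa [pplus] using sq_relaxed_projection_step_le (X i j) (C i j) (G i j) μ a (hC i j) ha

theorem stmt_15_general
    (M N R : ℕ)
    (V : Matrix (Fin M) (Fin N) ℝ)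
    (W : ℕ → Matrix (Fin M) (Fin R) ℝ) (H : ℕ → Matrix (Fin R) (Fin N) ℝ)
    (α μ : ℕ → ℝ)
    (T : ℕ → Matrix (Fin R) (Fin N) ℝ → Matrix (Fin R) (Fin N) ℝ)
    (hα : ∀ n, α n ∈ Set.Icc (0:ℝ) 1)
    (hT : ∀ n, W n ≠ 0 → ∀ X, T n X = pplus (X - μ n • ((W n)ᵀ * (W n * X - V))))
    (hHrec : ∀ n, H (n + 1) = α n • H n + (1 - α n) • T n (H n))
    :
    ∀ n : ℕ, W n ≠ 0 →
      ∀ Hc : Matrix (Fin R) (Fin N) ℝ, matNonneg Hc →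
        frob (H (n + 1) - Hc) ^ 2 ≤
          frob (H n - Hc) ^ 2 +
            2 * μ n * (1 - α n) * fip (Hc - T n (H n)) ((W n)ᵀ * (W n * H n - V)) := by
  intro n hWn Hc hHc
  rw [hHrec n, hT n hWn]
  exact frob_sq_relaxed_projection_step_le _ _ _ hHc _ _ (hα n)

theorem stmt_15
    (M N R : ℕ) (hM : 0 < M) (hN : 0 < N) (hR : 0 < R)
    (V : Matrix (Fin M) (Fin N) ℝ)
    (W : ℕ → Matrix (Fin M) (Fin R) ℝ) (H : ℕ → Matrix (Fin R) (Fin N) ℝ)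
    (α β μ lam : ℕ → ℝ)
    (T : ℕ → Matrix (Fin R) (Fin N) ℝ → Matrix (Fin R) (Fin N) ℝ)
    (S : ℕ → Matrix (Fin M) (Fin R) ℝ → Matrix (Fin M) (Fin R) ℝ)
    (hW0 : matNonneg (W 0)) (hH0 : matNonneg (H 0))
    (hα : ∀ n, α n ∈ Set.Icc (0:ℝ) 1) (hβ : ∀ n, β n ∈ Set.Icc (0:ℝ) 1)
    (hμ : ∀ n, W n ≠ 0 → 0 < μ n ∧ μ n ≤ 2 / frob ((W n)ᵀ * W n))
    (hT : ∀ n, W n ≠ 0 → ∀ X, T n X = pplus (X - μ n • ((W n)ᵀ * (W n * X - V))))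
    (hT0 : ∀ n, W n = 0 → ∀ X, T n X = X)
    (hHrec : ∀ n, H (n + 1) = α n • H n + (1 - α n) • T n (H n))
    (hlam : ∀ n, H (n + 1) ≠ 0 → 0 < lam n ∧ lam n ≤ 2 / frob ((H (n + 1))ᵀ * H (n + 1)))
    (hS : ∀ n, H (n + 1) ≠ 0 → ∀ X, S n X = pplus (X - lam n • ((X * H (n + 1) - V) * (H (n + 1))ᵀ)))
    (hS0 : ∀ n, H (n + 1) = 0 → ∀ X, S n X = X)
    (hWrec : ∀ n, W (n + 1) = β n • W n + (1 - β n) • S n (W n))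
    :
    ∀ n : ℕ, W n ≠ 0 →
      ∀ Hc : Matrix (Fin R) (Fin N) ℝ, matNonneg Hc →
        frob (H (n + 1) - Hc) ^ 2 ≤
          frob (H n - Hc) ^ 2 +
            2 * μ n * (1 - α n) * fip (Hc - T n (H n)) ((W n)ᵀ * (W n * H n - V)) :=
  stmt_15_general M N R V W H α μ T hα hT hHrec
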